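/- Let n be an even positive integer. Let X be uniform on {0,1}^n, K uniform on [n] independent of X, and M⁰ a random variable on a finite set jointly distributed with (X,K); write M(x; x[1,j]) for the conditional law of M⁰ given (X,K) = (x,j), and set c = I(K : M⁰ | X). Let J be uniform on [n/2] and L uniform on {n/2+1,…,n}, with X, J, L mutually independent. For l ∈ {n/2+1,…,n}, z ∈ {0,1}^l and j ≤ l, let M(z·X[l+1,n]; z[1,j]) denote the mixture over a uniformly random suffix s ∈ {0,1}^{n−l} of the distributions M(z·s; z[1,j]). Then E_{(z,j,l)←(X[1,L],J,L)} h( M(z·X[l+1,n]; z[1,j]) , M(z·X[l+1,n]; z) ) ≤ √(8 κ c). -/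

import Mathlib

open Finset

/-- Hellinger distance between two distributions on a finite set. -/
noncomputable def hell {S : Type*} [Fintype S] (p q : S → ℝ) : ℝ :=
  Real.sqrt ((1/2) * ∑ s, (Real.sqrt (p s) - Real.sqrt (q s))^2)

/-- ℓ1-distance between two distributions on a finite set. -/
noncomputable def l1 {S : Type*} [Fintype S] (p q : S → ℝ) : ℝ :=
  ∑ s, |p s - q s|

/-- Shannon entropy (base 2) of a distribution on a finite set. -/
noncomputable def ent {S : Type*} [Fintype S] (p : S → ℝ) : ℝ :=
  -∑ s, p s * Real.logb 2 (p s)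

/-- Conditional Shannon mutual information `I(A:B|C)` of a joint distribution on
`A × B × C`, via `I(A:B|C) = H(A,C) + H(B,C) - H(A,B,C) - H(C)`. -/
noncomputable def condMI {A B C : Type*} [Fintype A] [Fintype B] [Fintype C]
    (p : A × B × C → ℝ) : ℝ :=
  ent (fun ac : A × C => ∑ b, p (ac.1, b, ac.2))
    + ent (fun bc : B × C => ∑ a, p (a, bc.1, bc.2))
    - ent p
    - ent (fun c : C => ∑ a, ∑ b, p (a, b, c))

/-- The prefix `x[1,k]` (1-based index `k = k₀+1` for `k₀ : Fin n`), padded with `false`. -/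
def prefLe {n : ℕ} (x : Fin n → Bool) (k : Fin n) : Fin n → Bool :=
  fun i => if i ≤ k then x i else false

/-- The strict prefix `x[1,k−1]`, padded with `false`. -/
def prefLt {n : ℕ} (x : Fin n → Bool) (k : Fin n) : Fin n → Bool :=
  fun i => if i < k then x i else false

/-- The string `x` with its `k`-th bit flipped. -/
def flipAt {n : ℕ} (x : Fin n → Bool) (k : Fin n) : Fin n → Bool :=
  Function.update x k (!(x k))

/-- `M(z·X[l+1,n]; z[1,k])`: the mixture, over a uniformly random suffix, of the
conditional laws `Mc y k` over Alice's strings `y` agreeing with `z` on the (1-based)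
positions `1,…,l+1`, with Bob's index `k`. -/
noncomputable def mixC {n : ℕ} {T : Type*} [Fintype T]
    (Mc : (Fin n → Bool) → Fin n → T → ℝ)
    (z : Fin n → Bool) (l k : Fin n) : T → ℝ :=
  fun m => (∑ y, if ∀ i, i ≤ l → y i = z i then Mc y k m else 0)
    / 2 ^ (n - ((l : ℕ) + 1))

/-!
Let `M̄_x` be the average of the laws `M(x; k)` over `k`. Because `K` is uniform and independent
of `X`, `c = I(K : M⁰ | X)` is the average over `(x, k)` of the Kullback–Leibler divergence (in
bits) of `M(x; k)` from `M̄_x`, and `KL ≥ 2 h²` (in nats) gives `E_{x,k} h²(M(x; k), M̄_x) ≤ κ c`.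

By joint convexity of `h²`, the suffix mixture `M(z·X[l+1,n]; z[1,k])` is within squared
distance `G(z,l,k) = E_y h²(M(y; k), M̄_y)`, over the extensions `y` of `z`, of the same
mixture of the `M̄_y`. Passing through that mixture,
`h ≤ √G(z,l,j) + √G(z,l,l) ≤ √(2 (G(z,l,j) + G(z,l,l)))`. Averaged over `z`, `G` no longer
depends on `l`, and as `J` and `L` together cover `[n]` exactly once, Cauchy–Schwarz bounds the
expectation by `√(4 κ c) ≤ √(8 κ c)`.
-/

lemma sqrt_add_sqrt_le {a b : ℝ} (ha : 0 ≤ a) (hb : 0 ≤ b) : √a + √b ≤ √(2 * (a + b)) := by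
  rw [Real.le_sqrt (by positivity) (by positivity)]
  simpa [Real.sq_sqrt ha, Real.sq_sqrt hb] using add_sq_le (a := √a) (b := √b)

lemma sum_sqrt_le_sqrt_card_mul_sqrt_sum {ι : Type*} (s : Finset ι) {f : ι → ℝ}
    (hf : ∀ i, 0 ≤ f i) : ∑ i ∈ s, √(f i) ≤ √(#s : ℝ) * √(∑ i ∈ s, f i) := by
  simpa using Real.sum_sqrt_mul_sqrt_le s (fun _ => zero_le_one) hf

lemma sum_sum_sum_sqrt_le {α β γ : Type*} (s : Finset α) (t : Finset β) (u : Finset γ)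
    {f : α → β → γ → ℝ} (hf : ∀ a b c, 0 ≤ f a b c) :
    ∑ a ∈ s, ∑ b ∈ t, ∑ c ∈ u, √(f a b c)
      ≤ √((#s * #t * #u : ℕ) : ℝ) * √(∑ a ∈ s, ∑ b ∈ t, ∑ c ∈ u, f a b c) := by
  have key := sum_sqrt_le_sqrt_card_mul_sqrt_sum (s ×ˢ (t ×ˢ u))
    (f := fun p => f p.1 p.2.1 p.2.2) fun p => hf _ _ _
  simpa only [Finset.sum_product, Finset.card_product, mul_assoc] using key

lemma sq_sqrt_sum_sub_sqrt_sum_le {ι : Type*} (t : Finset ι) {w a b : ι → ℝ}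
    (hw : ∀ i, 0 ≤ w i) (ha : ∀ i, 0 ≤ a i) (hb : ∀ i, 0 ≤ b i) :
    (√(∑ i ∈ t, w i * a i) - √(∑ i ∈ t, w i * b i)) ^ 2
      ≤ ∑ i ∈ t, w i * (√(a i) - √(b i)) ^ 2 := by
  have hcs := Real.sum_sqrt_mul_sqrt_le t (fun i => mul_nonneg (hw i) (ha i))
    (fun i => mul_nonneg (hw i) (hb i))
  have hterm : ∀ i, √(w i * a i) * √(w i * b i) = w i * (√(a i) * √(b i)) := fun i => by
    rw [Real.sqrt_mul (hw i), Real.sqrt_mul (hw i)]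
    linear_combination (√(a i) * √(b i)) * Real.mul_self_sqrt (hw i)
  have hexp : ∑ i ∈ t, w i * (√(a i) - √(b i)) ^ 2 = ∑ i ∈ t, w i * a i + ∑ i ∈ t, w i * b i
      - 2 * ∑ i ∈ t, √(w i * a i) * √(w i * b i) := by
    simp only [hterm, Finset.mul_sum, ← Finset.sum_add_distrib, ← Finset.sum_sub_distrib]
    refine Finset.sum_congr rfl fun i _ => ?_
    linear_combination w i * (Real.sq_sqrt (ha i) + Real.sq_sqrt (hb i))
  rw [hexp, sub_sq, Real.sq_sqrt (Finset.sum_nonneg fun i _ => mul_nonneg (hw i) (ha i)),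
    Real.sq_sqrt (Finset.sum_nonneg fun i _ => mul_nonneg (hw i) (hb i))]
  linarith

lemma two_mul_sub_two_mul_sqrt_mul_le {p q : ℝ} (hp : 0 ≤ p) (hq : 0 ≤ q) (hpq : q = 0 → p = 0) :
    2 * p - 2 * √(p * q) ≤ p * Real.log (p / q) := by
  rcases hp.eq_or_lt with rfl | hp
  · simp
  have hq : 0 < q := hq.lt_of_ne fun h => hp.ne' (hpq h.symm)
  -- `log t ≤ t - 1` at `t = √(q / p)`
  have hlog := Real.log_le_sub_one_of_pos (Real.sqrt_pos.mpr (div_pos hq hp))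
  rw [Real.log_sqrt (div_pos hq hp).le, Real.log_div hq.ne' hp.ne'] at hlog
  rw [Real.log_div hp.ne' hq.ne', show p * q = p ^ 2 * (q / p) by field_simp,
    Real.sqrt_mul (sq_nonneg p), Real.sqrt_sq hp.le]
  nlinarith [mul_le_mul_of_nonneg_left hlog hp.le]

noncomputable def hellSq {S : Type*} [Fintype S] (p q : S → ℝ) : ℝ :=
  (1 / 2) * ∑ s, (√(p s) - √(q s)) ^ 2

section Hellinger

variable {S : Type*} [Fintype S]

lemma hell_eq_sqrt_hellSq (p q : S → ℝ) : hell p q = √(hellSq p q) := rfl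

lemma hellSq_nonneg (p q : S → ℝ) : 0 ≤ hellSq p q := by
  unfold hellSq; positivity

lemma hell_eq_mul_dist (p q : S → ℝ) :
    hell p q = √(1 / 2) * dist (WithLp.toLp 2 fun s => √(p s) : EuclideanSpace ℝ S)
      (WithLp.toLp 2 fun s => √(q s)) := by
  simp [hell, EuclideanSpace.dist_eq, Real.dist_eq, Real.sqrt_mul]

lemma hell_comm (p q : S → ℝ) : hell p q = hell q p := by
  simp only [hell_eq_mul_dist, dist_comm]

lemma hell_triangle (p q r : S → ℝ) : hell p r ≤ hell p q + hell q r := by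
  simp only [hell_eq_mul_dist, ← mul_add]
  exact mul_le_mul_of_nonneg_left (dist_triangle _ _ _) (Real.sqrt_nonneg _)

lemma hellSq_sum_mul_le {ι : Type*} (t : Finset ι) {w : ι → ℝ} {p q : ι → S → ℝ}
    (hw : ∀ i, 0 ≤ w i) (hp : ∀ i s, 0 ≤ p i s) (hq : ∀ i s, 0 ≤ q i s) :
    hellSq (fun s => ∑ i ∈ t, w i * p i s) (fun s => ∑ i ∈ t, w i * q i s)
      ≤ ∑ i ∈ t, w i * hellSq (p i) (q i) := by
  calc hellSq (fun s => ∑ i ∈ t, w i * p i s) (fun s => ∑ i ∈ t, w i * q i s)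
      ≤ (1 / 2) * ∑ s, ∑ i ∈ t, w i * (√(p i s) - √(q i s)) ^ 2 := by
        unfold hellSq
        gcongr with s
        exact sq_sqrt_sum_sub_sqrt_sum_le t hw (fun i => hp i s) (fun i => hq i s)
    _ = ∑ i ∈ t, w i * hellSq (p i) (q i) := by
        simp only [hellSq, Finset.mul_sum]
        rw [Finset.sum_comm]
        exact Finset.sum_congr rfl fun i _ => Finset.sum_congr rfl fun s _ => by ring

lemma two_mul_hellSq_le_sum_mul_log {p q : S → ℝ} (hp : ∀ s, 0 ≤ p s) (hq : ∀ s, 0 ≤ q s)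
    (hp1 : ∑ s, p s = 1) (hq1 : ∑ s, q s = 1) (hpq : ∀ s, q s = 0 → p s = 0) :
    2 * hellSq p q ≤ ∑ s, p s * Real.log (p s / q s) := by
  have hexp : 2 * hellSq p q = ∑ s, (2 * p s - 2 * √(p s * q s)) := by
    have h : ∀ s, (√(p s) - √(q s)) ^ 2 = p s + q s - 2 * √(p s * q s) := fun s => by
      rw [Real.sqrt_mul (hp s)]
      linear_combination Real.sq_sqrt (hp s) + Real.sq_sqrt (hq s)
    simp only [hellSq, h, Finset.sum_sub_distrib, Finset.sum_add_distrib, ← Finset.mul_sum,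
      hp1, hq1]
    ring
  rw [hexp]
  exact Finset.sum_le_sum fun s _ => two_mul_sub_two_mul_sqrt_mul_le (hp s) (hq s) (hpq s)

end Hellinger

open Real in
lemma condMI_eq_sum {A B C : Type*} [Fintype A] [Fintype B] [Fintype C] (p : A × B × C → ℝ) :
    condMI p = ∑ a, ∑ b, ∑ c, p (a, b, c) * (logb 2 (p (a, b, c))
      + logb 2 (∑ a', ∑ b', p (a', b', c)) - logb 2 (∑ b', p (a, b', c))
      - logb 2 (∑ a', p (a', b, c))) := by
  have hAC : ent (fun ac : A × C => ∑ b, p (ac.1, b, ac.2))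
      = -∑ a, ∑ b, ∑ c, p (a, b, c) * logb 2 (∑ b', p (a, b', c)) := by
    simp only [ent, Fintype.sum_prod_type, Finset.sum_mul]
    congr 1
    exact Finset.sum_congr rfl fun a _ => Finset.sum_comm
  have hBC : ent (fun bc : B × C => ∑ a, p (a, bc.1, bc.2))
      = -∑ a, ∑ b, ∑ c, p (a, b, c) * logb 2 (∑ a', p (a', b, c)) := by
    simp only [ent, Fintype.sum_prod_type, Finset.sum_mul]
    congr 1
    exact (Finset.sum_congr rfl fun b _ => Finset.sum_comm).trans Finset.sum_comm
  have hABC : ent p = -∑ a, ∑ b, ∑ c, p (a, b, c) * logb 2 (p (a, b, c)) := by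
    simp only [ent, Fintype.sum_prod_type]
  have hC : ent (fun c : C => ∑ a, ∑ b, p (a, b, c))
      = -∑ a, ∑ b, ∑ c, p (a, b, c) * logb 2 (∑ a', ∑ b', p (a', b', c)) := by
    simp only [ent, Finset.sum_mul]
    congr 1
    rw [Finset.sum_comm]
    exact Finset.sum_congr rfl fun a _ => Finset.sum_comm
  rw [condMI, hAC, hBC, hABC, hC]
  simp only [mul_sub, mul_add, Finset.sum_add_distrib, Finset.sum_sub_distrib]
  ring

section MeanLaw

variable {A B C : Type*}

noncomputable def meanLaw [Fintype A] (P : C → A → B → ℝ) (c : C) (b : B) : ℝ :=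
  (∑ a, P c a b) / Fintype.card A

variable {P : C → A → B → ℝ}

lemma meanLaw_nonneg [Fintype A] (hP : ∀ c a b, 0 ≤ P c a b) (c : C) (b : B) :
    0 ≤ meanLaw P c b :=
  div_nonneg (Finset.sum_nonneg fun a _ => hP c a b) (Nat.cast_nonneg _)

lemma sum_meanLaw [Fintype A] [Nonempty A] [Fintype B] (hP1 : ∀ c a, ∑ b, P c a b = 1)
    (c : C) : ∑ b, meanLaw P c b = 1 := by
  simp only [meanLaw, ← Finset.sum_div]
  rw [Finset.sum_comm]
  simp [hP1]

lemma eq_zero_of_meanLaw_eq_zero [Fintype A] (hP : ∀ c a b, 0 ≤ P c a b) {c : C} {b : B}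
    (h : meanLaw P c b = 0) (a : A) : P c a b = 0 := by
  have : Nonempty A := ⟨a⟩
  have hsum : ∑ a, P c a b = 0 := by simpa [meanLaw, Fintype.card_ne_zero] using h
  exact (Finset.sum_eq_zero_iff_of_nonneg fun a _ => hP c a b).mp hsum a (Finset.mem_univ a)

open Real in
lemma condMI_const_mul_eq [Fintype A] [Fintype B] [Fintype C] {w : ℝ} (hw : 0 < w)
    (hP : ∀ c a b, 0 ≤ P c a b) (hP1 : ∀ c a, ∑ b, P c a b = 1) :
    condMI (fun q : A × B × C => w * P q.2.2 q.1 q.2.1)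
      = w * ∑ c, ∑ a, ∑ b, P c a b * logb 2 (P c a b / meanLaw P c b) := by
  have hterm : ∀ c a b, w * P c a b * (logb 2 (w * P c a b) + logb 2 (Fintype.card A * w)
      - logb 2 w - logb 2 (w * ∑ a', P c a' b))
      = w * (P c a b * logb 2 (P c a b / meanLaw P c b)) := fun c a b => by
    rcases (hP c a b).eq_or_lt with h0 | hpos
    · simp [← h0]
    have : Nonempty A := ⟨a⟩
    have hcard : (0 : ℝ) < Fintype.card A := Nat.cast_pos.mpr Fintype.card_pos
    have hsum : 0 < ∑ a', P c a' b :=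
      hpos.trans_le (Finset.single_le_sum (fun a' _ => hP c a' b) (Finset.mem_univ a))
    rw [meanLaw, logb_mul hw.ne' hpos.ne', logb_mul hcard.ne' hw.ne', logb_mul hw.ne' hsum.ne',
      logb_div hpos.ne' (div_pos hsum hcard).ne', logb_div hsum.ne' hcard.ne']
    ring
  rw [condMI_eq_sum]
  simp only [← Finset.mul_sum, hP1, Finset.sum_const, Finset.card_univ, nsmul_eq_mul, mul_one]
  rw [Finset.sum_congr rfl fun a _ => Finset.sum_comm, Finset.sum_comm]
  simp only [hterm]
  simp only [Finset.mul_sum]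

end MeanLaw

lemma mul_sum_hellSq_meanLaw_le {A B C : Type*} [Fintype A] [Fintype B] [Fintype C]
    {P : C → A → B → ℝ} {w : ℝ} (hw : 0 < w) (hP : ∀ c a b, 0 ≤ P c a b)
    (hP1 : ∀ c a, ∑ b, P c a b = 1) :
    w * ∑ c, ∑ a, hellSq (P c a) (meanLaw P c)
      ≤ Real.log 2 / 2 * condMI (fun q : A × B × C => w * P q.2.2 q.1 q.2.1) := by
  have hlog2 : Real.log 2 ≠ 0 := (Real.log_pos one_lt_two).ne'
  calc w * ∑ c, ∑ a, hellSq (P c a) (meanLaw P c)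
      ≤ w * ∑ c, ∑ a, (∑ b, P c a b * Real.log (P c a b / meanLaw P c b)) / 2 := by
        gcongr with c _ a _
        have : Nonempty A := ⟨a⟩
        linarith [two_mul_hellSq_le_sum_mul_log (hP c a) (meanLaw_nonneg hP c) (hP1 c a)
          (sum_meanLaw hP1 c) fun b hb => eq_zero_of_meanLaw_eq_zero hP hb a]
    _ = Real.log 2 / 2 * condMI (fun q : A × B × C => w * P q.2.2 q.1 q.2.1) := by
        simp only [condMI_const_mul_eq hw hP hP1, Real.logb, Finset.mul_sum, Finset.sum_div]
        refine Finset.sum_congr rfl fun c _ => Finset.sum_congr rfl fun a _ =>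
          Finset.sum_congr rfl fun b _ => ?_
        field_simp

section Suffix

variable {n : ℕ}

noncomputable def suffixWeight (x : Fin n → Bool) (l : Fin n) (y : Fin n → Bool) : ℝ :=
  if ∀ i, i ≤ l → y i = x i then 1 / 2 ^ (n - ((l : ℕ) + 1)) else 0

lemma suffixWeight_nonneg (x : Fin n → Bool) (l : Fin n) (y : Fin n → Bool) :
    0 ≤ suffixWeight x l y := by
  unfold suffixWeight; split_ifs <;> positivity

lemma card_filter_forall_le_eq (y : Fin n → Bool) (l : Fin n) :
    #{x : Fin n → Bool | ∀ i, i ≤ l → y i = x i} = 2 ^ (n - ((l : ℕ) + 1)) := by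
  have hpi : ({x : Fin n → Bool | ∀ i, i ≤ l → y i = x i} : Finset _)
      = Fintype.piFinset fun i => if i ≤ l then {y i} else univ := by
    ext x
    simp only [Finset.mem_filter, Finset.mem_univ, true_and, Fintype.mem_piFinset]
    refine forall_congr' fun i => ?_
    split_ifs with hi
    · simp [hi, eq_comm]
    · simp [hi]
  rw [hpi, Fintype.card_piFinset]
  simp only [apply_ite Finset.card, Finset.card_singleton, Finset.card_univ, Fintype.card_bool]
  rw [Finset.prod_ite, Finset.prod_const_one, one_mul, Finset.prod_const]
  congr 1
  rw [show ({i | ¬i ≤ l} : Finset (Fin n)) = Finset.Ioi l by ext; simp, Fin.card_Ioi]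
  omega

lemma sum_suffixWeight (l : Fin n) (y : Fin n → Bool) : ∑ x, suffixWeight x l y = 1 := by
  simp only [suffixWeight, ← Finset.sum_filter, Finset.sum_const, card_filter_forall_le_eq,
    nsmul_eq_mul]
  push_cast
  field_simp

lemma sum_sum_suffixWeight_mul (l : Fin n) (g : (Fin n → Bool) → ℝ) :
    ∑ x, ∑ y, suffixWeight x l y * g y = ∑ y, g y := by
  rw [Finset.sum_comm]
  simp only [← Finset.sum_mul, sum_suffixWeight, one_mul]

lemma mixC_eq_sum_suffixWeight_mul {T : Type*} [Fintype T]
    (Mc : (Fin n → Bool) → Fin n → T → ℝ) (x : Fin n → Bool) (l k : Fin n) :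
    mixC Mc x l k = fun m => ∑ y, suffixWeight x l y * Mc y k m := by
  ext m
  simp only [mixC, suffixWeight, Finset.sum_div]
  refine Finset.sum_congr rfl fun y _ => ?_
  split_ifs <;> ring

end Suffix

section Mixture

variable {n : ℕ} {T : Type*} [Fintype T]

noncomputable def suffixHellSq (Mc : (Fin n → Bool) → Fin n → T → ℝ) (x : Fin n → Bool)
    (l k : Fin n) : ℝ :=
  ∑ y, suffixWeight x l y * hellSq (Mc y k) (meanLaw Mc y)

variable {Mc : (Fin n → Bool) → Fin n → T → ℝ}

lemma suffixHellSq_nonneg (x : Fin n → Bool) (l k : Fin n) : 0 ≤ suffixHellSq Mc x l k :=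
  Finset.sum_nonneg fun y _ => mul_nonneg (suffixWeight_nonneg x l y) (hellSq_nonneg _ _)

lemma hell_mixC_le (hnn : ∀ x k m, 0 ≤ Mc x k m) (x : Fin n → Bool) (l j k : Fin n) :
    hell (mixC Mc x l j) (mixC Mc x l k)
      ≤ √(suffixHellSq Mc x l j) + √(suffixHellSq Mc x l k) := by
  set mid : T → ℝ := fun m => ∑ y, suffixWeight x l y * meanLaw Mc y m
  have hmid : ∀ k, hell (mixC Mc x l k) mid ≤ √(suffixHellSq Mc x l k) := fun k => by
    rw [hell_eq_sqrt_hellSq, mixC_eq_sum_suffixWeight_mul]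
    exact Real.sqrt_le_sqrt (hellSq_sum_mul_le univ (suffixWeight_nonneg x l)
      (fun y => hnn y k) (meanLaw_nonneg hnn))
  calc hell (mixC Mc x l j) (mixC Mc x l k)
      ≤ hell (mixC Mc x l j) mid + hell mid (mixC Mc x l k) := hell_triangle _ _ _
    _ ≤ _ := by rw [hell_comm mid]; exact add_le_add (hmid j) (hmid k)

lemma sum_sum_sum_suffixHellSq (s t : Finset (Fin n)) :
    ∑ x, ∑ j ∈ s, ∑ l ∈ t, (suffixHellSq Mc x l j + suffixHellSq Mc x l l)
      = #t * ∑ j ∈ s, ∑ y, hellSq (Mc y j) (meanLaw Mc y)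
        + #s * ∑ l ∈ t, ∑ y, hellSq (Mc y l) (meanLaw Mc y) := by
  have hx : ∀ l k, ∑ x, suffixHellSq Mc x l k = ∑ y, hellSq (Mc y k) (meanLaw Mc y) :=
    fun l k => sum_sum_suffixWeight_mul l _
  have hj : ∑ x, ∑ j ∈ s, ∑ l ∈ t, suffixHellSq Mc x l j
      = #t * ∑ j ∈ s, ∑ y, hellSq (Mc y j) (meanLaw Mc y) := by
    rw [Finset.sum_comm, Finset.mul_sum]
    refine Finset.sum_congr rfl fun j _ => ?_
    simp [Finset.sum_comm (s := univ), hx]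
  have hl : ∑ x, ∑ j ∈ s, ∑ l ∈ t, suffixHellSq Mc x l l
      = #s * ∑ l ∈ t, ∑ y, hellSq (Mc y l) (meanLaw Mc y) := by
    simp only [Finset.sum_const, nsmul_eq_mul, ← Finset.mul_sum]
    rw [Finset.sum_comm]
    simp [hx]
  simp only [Finset.sum_add_distrib, hj, hl]

lemma sum_hell_mixC_le (hnn : ∀ x k m, 0 ≤ Mc x k m) (s : Finset (Fin n)) {N : ℕ}
    (hs : #s = N) (hsc : #sᶜ = N) :
    ∑ x, ∑ j ∈ s, ∑ l ∈ sᶜ, hell (mixC Mc x l j) (mixC Mc x l l)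
      ≤ √(2 ^ n * N * N) * √(2 * (N * ∑ y, ∑ k, hellSq (Mc y k) (meanLaw Mc y))) := by
  have hG : ∀ x j l, 0 ≤ 2 * (suffixHellSq Mc x l j + suffixHellSq Mc x l l) := fun x j l =>
    mul_nonneg zero_le_two (add_nonneg (suffixHellSq_nonneg x l j) (suffixHellSq_nonneg x l l))
  calc ∑ x, ∑ j ∈ s, ∑ l ∈ sᶜ, hell (mixC Mc x l j) (mixC Mc x l l)
      ≤ ∑ x, ∑ j ∈ s, ∑ l ∈ sᶜ, √(2 * (suffixHellSq Mc x l j + suffixHellSq Mc x l l)) := by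
        gcongr with x _ j _ l _
        exact (hell_mixC_le hnn x l j l).trans
          (sqrt_add_sqrt_le (suffixHellSq_nonneg x l j) (suffixHellSq_nonneg x l l))
    _ ≤ √((#(univ : Finset (Fin n → Bool)) * #s * #sᶜ : ℕ) : ℝ) *
          √(∑ x, ∑ j ∈ s, ∑ l ∈ sᶜ, 2 * (suffixHellSq Mc x l j + suffixHellSq Mc x l l)) :=
        sum_sum_sum_sqrt_le _ _ _ hG
    _ = √(2 ^ n * N * N) * √(2 * (N * ∑ y, ∑ k, hellSq (Mc y k) (meanLaw Mc y))) := by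
        simp only [← Finset.mul_sum, sum_sum_sum_suffixHellSq, hs, hsc, ← mul_add,
          Finset.sum_add_sum_compl, Finset.card_univ, Fintype.card_fun, Fintype.card_bool,
          Fintype.card_fin]
        rw [Finset.sum_comm]
        push_cast
        rfl

lemma avg_hell_mixC_le (hnn : ∀ x k m, 0 ≤ Mc x k m) (s : Finset (Fin n)) {N : ℕ}
    (hN : 0 < N) (hs : #s = N) (hsc : #sᶜ = N) :
    1 / (2 ^ n * N * N) * ∑ x, ∑ j ∈ s, ∑ l ∈ sᶜ, hell (mixC Mc x l j) (mixC Mc x l l)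
      ≤ √(4 * (1 / 2 ^ n * (1 / n) * ∑ y, ∑ k, hellSq (Mc y k) (meanLaw Mc y))) := by
  have hn : (n : ℝ) = N + N := by
    have := Finset.card_add_card_compl s
    rw [hs, hsc, Fintype.card_fin] at this
    exact_mod_cast this.symm
  have hN' : (0 : ℝ) < N := Nat.cast_pos.mpr hN
  refine (mul_le_mul_of_nonneg_left (sum_hell_mixC_le hnn s hs hsc) (by positivity)).trans_eq ?_
  rw [← Real.sqrt_mul (by positivity), ← Real.sqrt_sq (by positivity : (0 : ℝ) ≤
    1 / (2 ^ n * N * N)), ← Real.sqrt_mul (sq_nonneg _), hn]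
  congr 1
  field_simp
  ring

end Mixture

/-- Eq. (1) in the proof of Lemma `thm-close`: with `X` uniform on
`{0,1}^n`, `K` uniform on `[n]` independent of `X`, `M⁰` having conditional law
`Mc x k` given `(X,K) = (x,k)`, and `c = I(K : M⁰ | X)`, for `J` uniform on `[n/2]`
and `L` uniform on `{n/2+1,…,n}` (0-based `j, l : Fin n`),
`E_{(z,j,l)} h(M(z·X[l+1,n]; z[1,j]), M(z·X[l+1,n]; z)) ≤ √(8κc)`. -/
theorem index_change_perturbation_mixture
    {n : ℕ} (hn : Even n) (hpos : 0 < n) {T : Type*} [Fintype T]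
    (Mc : (Fin n → Bool) → Fin n → T → ℝ)
    (hnn : ∀ x k m, 0 ≤ Mc x k m)
    (hsum : ∀ x k, ∑ m, Mc x k m = 1) :
    (1 / 2 ^ n) * (2 / (n : ℝ)) ^ 2 *
        ∑ x : Fin n → Bool,
          ∑ j ∈ Finset.univ.filter (fun j : Fin n => (j : ℕ) < n / 2),
            ∑ l ∈ Finset.univ.filter (fun l : Fin n => n / 2 ≤ (l : ℕ)),
              hell (mixC Mc x l j) (mixC Mc x l l)
      ≤ Real.sqrt (8 * (Real.log 2 / 2) *
          condMI (fun q : Fin n × T × (Fin n → Bool) =>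
            (1 / 2 ^ n) * (1 / (n : ℝ)) * Mc q.2.2 q.1 q.2.1)) := by
  obtain ⟨N, rfl⟩ := hn
  have hN : 0 < N := by omega
  set J := univ.filter fun j : Fin (N + N) => (j : ℕ) < (N + N) / 2
  have hL : univ.filter (fun l : Fin (N + N) => (N + N) / 2 ≤ (l : ℕ)) = Jᶜ := by
    ext; simp [J]
  have hJ : #J = N := by
    rw [Fin.card_filter_val_lt]; omega
  have hJc : #Jᶜ = N := by
    rw [Finset.card_compl, hJ, Fintype.card_fin]; omega
  have hpre : 1 / 2 ^ (N + N) * (2 / ((N + N : ℕ) : ℝ)) ^ 2 = 1 / (2 ^ (N + N) * N * N) := by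
    have : (0 : ℝ) < N := Nat.cast_pos.mpr hN
    push_cast; field_simp; ring
  rw [hL, hpre]
  refine (avg_hell_mixC_le hnn J hN hJ hJc).trans (Real.sqrt_le_sqrt ?_)
  have hMI := mul_sum_hellSq_meanLaw_le
    (w := 1 / 2 ^ (N + N) * (1 / ((N + N : ℕ) : ℝ))) (by positivity) hnn hsum
  have hS : 0 ≤ 1 / 2 ^ (N + N) * (1 / ((N + N : ℕ) : ℝ)) *
      ∑ y, ∑ k, hellSq (Mc y k) (meanLaw Mc y) := mul_nonneg (by positivity)
    (Finset.sum_nonneg fun y _ => Finset.sum_nonneg fun k _ => hellSq_nonneg _ _)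
  linarith
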